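/- An exchangeable probability measure P on {0,1}^ℕ assigns probability 1 to the event that the limiting relative frequency lim_{n→∞}(1/n)Σ_{i≤n}X_i exists. -/

import Mathlib

open MeasureTheory Filter

def Exchangeable (P : Measure (ℕ → Bool)) : Prop :=
  ∀ (n : ℕ) (x : Fin n → Bool) (π : Equiv.Perm (Fin n)),
    P {ω | ∀ i : Fin n, ω i = x i} = P {ω | ∀ i : Fin n, ω (π i) = x i}

lemma exists_perm {α : Type*} [DecidableEq α] {p q u v : α} (hpq : p ≠ q) (huv : u ≠ v) :
    ∃ π : Equiv.Perm α, π p = u ∧ π q = v := by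
  refine ⟨Equiv.swap (Equiv.swap p u q) v * Equiv.swap p u, ?_, ?_⟩
  · simp only [Equiv.Perm.mul_apply, Equiv.swap_apply_left]
    rw [Equiv.swap_apply_of_ne_of_ne]
    · intro h
      exact hpq (by simpa using (Equiv.swap p u).injective (by simp [h.symm]))
    · exact huv
  · simp [Equiv.Perm.mul_apply]

lemma perm_inv {P : Measure (ℕ → Bool)} (hP : Exchangeable P) (n : ℕ)
    (s : Set (Fin n → Bool)) (π : Equiv.Perm (Fin n)) :
    P {ω | (fun i : Fin n => ω i) ∈ s} = P {ω | (fun i : Fin n => ω (π i)) ∈ s} := by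
  classical
  set F : Finset (Fin n → Bool) := Finset.univ.filter (· ∈ s) with hF
  have hC : ∀ x : Fin n → Bool, MeasurableSet {ω : ℕ → Bool | ∀ i : Fin n, ω i = x i} := by
    intro x
    have : {ω : ℕ → Bool | ∀ i : Fin n, ω i = x i}
        = ⋂ i : Fin n, (fun ω : ℕ → Bool => ω i) ⁻¹' {x i} := by
      ext ω; simp [Set.mem_iInter]
    rw [this]
    exact MeasurableSet.iInter fun i => (measurable_pi_apply _) (measurableSet_singleton _)
  have hD : ∀ x : Fin n → Bool, MeasurableSet {ω : ℕ → Bool | ∀ i : Fin n, ω (π i) = x i} := by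
    intro x
    have : {ω : ℕ → Bool | ∀ i : Fin n, ω (π i) = x i}
        = ⋂ i : Fin n, (fun ω : ℕ → Bool => ω (π i)) ⁻¹' {x i} := by
      ext ω; simp [Set.mem_iInter]
    rw [this]
    exact MeasurableSet.iInter fun i => (measurable_pi_apply _) (measurableSet_singleton _)
  have hL : {ω : ℕ → Bool | (fun i : Fin n => ω i) ∈ s}
      = ⋃ x ∈ F, {ω : ℕ → Bool | ∀ i : Fin n, ω i = x i} := by
    ext ω
    simp only [Set.mem_setOf_eq, Set.mem_iUnion, hF, Finset.mem_filter, Finset.mem_univ, true_and]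
    constructor
    · intro h; exact ⟨fun i => ω i, h, fun i => rfl⟩
    · rintro ⟨x, hx, hall⟩
      have : (fun i : Fin n => ω i) = x := funext hall
      rwa [this]
  have hR : {ω : ℕ → Bool | (fun i : Fin n => ω (π i)) ∈ s}
      = ⋃ x ∈ F, {ω : ℕ → Bool | ∀ i : Fin n, ω (π i) = x i} := by
    ext ω
    simp only [Set.mem_setOf_eq, Set.mem_iUnion, hF, Finset.mem_filter, Finset.mem_univ, true_and]
    constructor
    · intro h; exact ⟨fun i => ω (π i), h, fun i => rfl⟩
    · rintro ⟨x, hx, hall⟩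
      have : (fun i : Fin n => ω (π i)) = x := funext hall
      rwa [this]
  rw [hL, hR, measure_biUnion_finset ?dL (fun x _ => hC x),
    measure_biUnion_finset ?dR (fun x _ => hD x)]
  · exact Finset.sum_congr rfl fun x _ => hP n x π
  case dL =>
    intro x _ y _ hxy
    refine Set.disjoint_left.2 fun ω hx hy => hxy (funext fun i => ?_)
    rw [← hx i, ← hy i]
  case dR =>
    intro x _ y _ hxy
    refine Set.disjoint_left.2 fun ω hx hy => hxy (funext fun i => ?_)
    rw [← hx i, ← hy i]


lemma meas_single {P : Measure (ℕ → Bool)} (hP : Exchangeable P) (a : ℕ) :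
    P {ω | ω a = true} = P {ω | ω 0 = true} := by
  classical
  rcases eq_or_ne a 0 with rfl | ha0
  · rfl
  set n := a + 1 with hn
  have ha : a < n := by omega
  have hpq : (⟨0, by omega⟩ : Fin n) ≠ ⟨a, ha⟩ := by
    simp only [ne_eq, Fin.mk.injEq]; omega
  obtain ⟨π, hπ0, -⟩ := exists_perm (p := (⟨0, by omega⟩ : Fin n)) (q := ⟨a, ha⟩)
    (u := (⟨a, ha⟩ : Fin n)) (v := ⟨0, by omega⟩) hpq hpq.symm
  have key := perm_inv hP n {y : Fin n → Bool | y ⟨0, by omega⟩ = true} π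
  rw [show P {ω : ℕ → Bool | (fun i : Fin n => ω i) ∈
        {y : Fin n → Bool | y ⟨0, by omega⟩ = true}} = P {ω | ω 0 = true} from rfl,
    show P {ω : ℕ → Bool | (fun i : Fin n => ω (π i)) ∈
        {y : Fin n → Bool | y ⟨0, by omega⟩ = true}} = P {ω | ω a = true} by
      congr 1; ext ω; simp only [Set.mem_setOf_eq]; rw [hπ0]] at key
  exact key.symm

lemma meas_pair {P : Measure (ℕ → Bool)} (hP : Exchangeable P) {a b : ℕ} (hab : a ≠ b) :
    P {ω | ω a = true ∧ ω b = true} = P {ω | ω 0 = true ∧ ω 1 = true} := by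
  classical
  set n := max a b + 2 with hn
  have ha : a < n := by omega
  have hb : b < n := by omega
  have hpq : (⟨0, by omega⟩ : Fin n) ≠ ⟨1, by omega⟩ := by
    simp only [ne_eq, Fin.mk.injEq]; omega
  have huv : (⟨a, ha⟩ : Fin n) ≠ ⟨b, hb⟩ := by
    simp only [ne_eq, Fin.mk.injEq]; omega
  obtain ⟨π, hπ0, hπ1⟩ := exists_perm hpq huv
  have key := perm_inv hP n
    {y : Fin n → Bool | y ⟨0, by omega⟩ = true ∧ y ⟨1, by omega⟩ = true} π
  rw [show P {ω : ℕ → Bool | (fun i : Fin n => ω i) ∈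
        {y : Fin n → Bool | y ⟨0, by omega⟩ = true ∧ y ⟨1, by omega⟩ = true}}
      = P {ω | ω 0 = true ∧ ω 1 = true} from rfl,
    show P {ω : ℕ → Bool | (fun i : Fin n => ω (π i)) ∈
        {y : Fin n → Bool | y ⟨0, by omega⟩ = true ∧ y ⟨1, by omega⟩ = true}}
      = P {ω | ω a = true ∧ ω b = true} by
      congr 1; ext ω; simp only [Set.mem_setOf_eq, hπ0, hπ1]] at key
  exact key.symm

noncomputable section

def ff (i : ℕ) (ω : ℕ → Bool) : ℝ := if ω i then 1 else 0

lemma measurable_ff (i : ℕ) : Measurable (ff i) := by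
  have : ff i = (fun b : Bool => if b then (1:ℝ) else 0) ∘ (fun ω : ℕ → Bool => ω i) := rfl
  rw [this]
  exact Measurable.of_discrete.comp (measurable_pi_apply i)

lemma ff_nonneg (i : ℕ) (ω : ℕ → Bool) : 0 ≤ ff i ω := by
  unfold ff; split <;> norm_num

lemma ff_le_one (i : ℕ) (ω : ℕ → Bool) : ff i ω ≤ 1 := by
  unfold ff; split <;> norm_num

lemma ff_sq (i : ℕ) (ω : ℕ → Bool) : ff i ω * ff i ω = ff i ω := by
  unfold ff; split <;> norm_num

lemma integrable_ff_mul (P : Measure (ℕ → Bool)) [IsProbabilityMeasure P] (i j : ℕ) :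
    Integrable (fun ω => ff i ω * ff j ω) P := by
  refine (integrable_const (1:ℝ)).mono' ?_ ?_
  · exact ((measurable_ff i).mul (measurable_ff j)).aestronglyMeasurable
  · refine Filter.Eventually.of_forall fun ω => ?_
    rw [Real.norm_eq_abs, abs_of_nonneg (mul_nonneg (ff_nonneg i ω) (ff_nonneg j ω))]
    calc ff i ω * ff j ω ≤ 1 * 1 := by
          exact mul_le_mul (ff_le_one i ω) (ff_le_one j ω) (ff_nonneg j ω) zero_le_one
      _ = 1 := by ring

lemma integrable_ff (P : Measure (ℕ → Bool)) [IsProbabilityMeasure P] (i : ℕ) :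
    Integrable (ff i) P := by
  have := integrable_ff_mul P i i
  simpa only [ff_sq] using this

def vv (P : Measure (ℕ → Bool)) : ℝ := (P {ω | ω 0 = true}).toReal

def cc (P : Measure (ℕ → Bool)) : ℝ := (P {ω | ω 0 = true ∧ ω 1 = true}).toReal

lemma meas_set_single (i : ℕ) : MeasurableSet {ω : ℕ → Bool | ω i = true} :=
  (measurable_pi_apply i) (measurableSet_singleton _)

lemma meas_set_pair (i j : ℕ) : MeasurableSet {ω : ℕ → Bool | ω i = true ∧ ω j = true} := by
  have : {ω : ℕ → Bool | ω i = true ∧ ω j = true}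
      = {ω : ℕ → Bool | ω i = true} ∩ {ω | ω j = true} := rfl
  rw [this]; exact (meas_set_single i).inter (meas_set_single j)

lemma int_indicator_set (P : Measure (ℕ → Bool)) [IsProbabilityMeasure P]
    (s : Set (ℕ → Bool)) (hs : MeasurableSet s) (g : (ℕ → Bool) → ℝ)
    (hg1 : ∀ ω ∈ s, g ω = 1) (hg0 : ∀ ω ∉ s, g ω = 0) :
    ∫ ω, g ω ∂P = (P s).toReal := by
  have : g = s.indicator (fun _ => (1:ℝ)) := by
    funext ω
    by_cases h : ω ∈ s
    · rw [hg1 ω h, Set.indicator_of_mem h]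
    · rw [hg0 ω h, Set.indicator_of_notMem h]
  rw [this, integral_indicator_const _ hs]; simp; rfl

lemma int_ff (P : Measure (ℕ → Bool)) [IsProbabilityMeasure P] (hP : Exchangeable P)
    (i j : ℕ) :
    ∫ ω, ff i ω * ff j ω ∂P = if i = j then vv P else cc P := by
  rcases eq_or_ne i j with rfl | hij
  · rw [if_pos rfl]
    simp only [ff_sq]
    rw [int_indicator_set P _ (meas_set_single i) (ff i)
      (fun ω h => by simp only [Set.mem_setOf_eq] at h; simp [ff, h])
      (fun ω h => by simp only [Set.mem_setOf_eq, Bool.not_eq_true] at h; simp [ff, h]), vv,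
      meas_single hP i]
  · rw [if_neg hij]
    rw [int_indicator_set P _ (meas_set_pair i j) _
      (fun ω h => by
        simp only [Set.mem_setOf_eq] at h
        simp [ff, h.1, h.2])
      (fun ω h => by
        simp only [Set.mem_setOf_eq, not_and_or, Bool.not_eq_true] at h
        rcases h with h | h <;> simp [ff, h]),
      cc, meas_pair hP hij]

def Sf (n : ℕ) (ω : ℕ → Bool) : ℝ := ∑ i ∈ Finset.range n, ff i ω

lemma measurable_Sf (n : ℕ) : Measurable (Sf n) := by
  unfold Sf
  exact Finset.measurable_sum _ fun i _ => measurable_ff i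

lemma int_SS (P : Measure (ℕ → Bool)) [IsProbabilityMeasure P] (hP : Exchangeable P)
    (n m : ℕ) :
    ∫ ω, Sf n ω * Sf m ω ∂P
      = (n:ℝ) * m * cc P + (min n m : ℕ) * (vv P - cc P) := by
  have hrw : ∀ ω, Sf n ω * Sf m ω
      = ∑ i ∈ Finset.range n, ∑ j ∈ Finset.range m, ff i ω * ff j ω := by
    intro ω
    rw [Sf, Sf, Finset.sum_mul_sum]
  rw [integral_congr_ae (Filter.Eventually.of_forall hrw)]
  rw [integral_finset_sum _ fun i _ => integrable_finset_sum _ fun j _ => integrable_ff_mul P i j]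
  have : ∀ i ∈ Finset.range n, ∫ ω, (∑ j ∈ Finset.range m, ff i ω * ff j ω) ∂P
      = ∑ j ∈ Finset.range m, (if i = j then vv P else cc P) := by
    intro i _
    rw [integral_finset_sum _ fun j _ => integrable_ff_mul P i j]
    exact Finset.sum_congr rfl fun j _ => int_ff P hP i j
  rw [Finset.sum_congr rfl this]
  have expand : ∀ i j : ℕ, (if i = j then vv P else cc P)
      = cc P + (if i = j then vv P - cc P else 0) := by
    intro i j; split <;> ring
  simp_rw [expand, Finset.sum_add_distrib, Finset.sum_const, Finset.card_range,
    Finset.sum_ite_eq, Finset.mem_range]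
  rw [Finset.sum_ite, Finset.sum_const_zero, Finset.sum_const]
  have hcard : (Finset.filter (fun i => i < m) (Finset.range n)).card = min n m := by
    rw [show Finset.filter (fun i => i < m) (Finset.range n)
        = Finset.range (min n m) by ext x; simp [Nat.lt_min]]
    exact Finset.card_range _
  rw [hcard]
  rcases le_total n m with h | h
  · rw [inf_eq_left.2 h]
    simp only [nsmul_eq_mul]
    ring
  · rw [inf_eq_right.2 h]
    simp only [nsmul_eq_mul]
    ring

end

noncomputable section
namespace Stmt19

lemma Sf_nonneg (n : ℕ) (ω : ℕ → Bool) : 0 ≤ Sf n ω :=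
  Finset.sum_nonneg fun i _ => ff_nonneg i ω

lemma Sf_le (n : ℕ) (ω : ℕ → Bool) : Sf n ω ≤ n := by
  calc Sf n ω ≤ ∑ _i ∈ Finset.range n, (1:ℝ) :=
        Finset.sum_le_sum fun i _ => ff_le_one i ω
    _ = n := by simp

lemma Sf_mono (ω : ℕ → Bool) : Monotone fun n => Sf n ω := by
  intro a b hab
  exact Finset.sum_le_sum_of_subset_of_nonneg (Finset.range_subset_range.2 hab)
    fun i _ _ => ff_nonneg i ω

lemma integrable_SS (P : Measure (ℕ → Bool)) [IsProbabilityMeasure P] (n m : ℕ) :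
    Integrable (fun ω => Sf n ω * Sf m ω) P := by
  refine (integrable_const ((n:ℝ) * m)).mono' ?_ ?_
  · exact ((measurable_Sf n).mul (measurable_Sf m)).aestronglyMeasurable
  · refine Filter.Eventually.of_forall fun ω => ?_
    rw [Real.norm_eq_abs, abs_of_nonneg (mul_nonneg (Sf_nonneg n ω) (Sf_nonneg m ω))]
    exact mul_le_mul (Sf_le n ω) (Sf_le m ω) (Sf_nonneg m ω) (Nat.cast_nonneg n)

lemma secondmoment (P : Measure (ℕ → Bool)) [IsProbabilityMeasure P] (hP : Exchangeable P)
    {m n : ℕ} (hm : 1 ≤ m) (hmn : m ≤ n) :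
    ∫ ω, (Sf n ω / n - Sf m ω / m)^2 ∂P
      = (vv P - cc P) * (1/(m:ℝ) - 1/(n:ℝ)) := by
  have hm' : (0:ℝ) < m := by exact_mod_cast hm
  have hn' : (0:ℝ) < n := lt_of_lt_of_le hm' (by exact_mod_cast hmn)
  have hrw : ∀ ω, (Sf n ω / n - Sf m ω / m)^2
      = (1/((n:ℝ)*n)) * (Sf n ω * Sf n ω) - (2/((n:ℝ)*m)) * (Sf n ω * Sf m ω)
        + (1/((m:ℝ)*m)) * (Sf m ω * Sf m ω) := by
    intro ω
    field_simp
    ring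
  rw [integral_congr_ae (Filter.Eventually.of_forall hrw)]
  rw [integral_add (f := fun ω => (1/((n:ℝ)*n)) * (Sf n ω * Sf n ω)
        - (2/((n:ℝ)*m)) * (Sf n ω * Sf m ω))
      (g := fun ω => (1/((m:ℝ)*m)) * (Sf m ω * Sf m ω))
      (((integrable_SS P n n).const_mul _).sub ((integrable_SS P n m).const_mul _))
      ((integrable_SS P m m).const_mul _),
    integral_sub (f := fun ω => (1/((n:ℝ)*n)) * (Sf n ω * Sf n ω))
      (g := fun ω => (2/((n:ℝ)*m)) * (Sf n ω * Sf m ω))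
      ((integrable_SS P n n).const_mul _) ((integrable_SS P n m).const_mul _),
    integral_const_mul, integral_const_mul, integral_const_mul,
    int_SS P hP n n, int_SS P hP n m, int_SS P hP m m,
    min_self, min_eq_right hmn, min_self]
  field_simp
  ring

end Stmt19
end

namespace Stmt19

lemma sqrt_tendsto : Tendsto Nat.sqrt atTop atTop := by
  refine tendsto_atTop_atTop.2 fun m => ⟨m*m, fun n hn => Nat.le_sqrt.2 ?_⟩
  calc m*m ≤ n := hn

lemma freq_conv {u : ℕ → ℝ} (hmono : Monotone u) (hnn : ∀ n, 0 ≤ u n) {L : ℝ}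
    (hT : Tendsto (fun k : ℕ => u (k^2) / ((k:ℝ))^2) atTop (nhds L)) :
    Tendsto (fun n : ℕ => u n / (n:ℝ)) atTop (nhds L) := by
  have hq : Tendsto (fun k : ℕ => ((k:ℝ)/((k:ℝ)+1))^2) atTop (nhds 1) := by
    have := (tendsto_natCast_div_add_atTop (1:ℝ)).pow 2
    simpa using this
  have hr : Tendsto (fun k : ℕ => (((k:ℝ)+1)/(k:ℝ))^2) atTop (nhds 1) := by
    have h1 : Tendsto (fun k : ℕ => 1 + 1/(k:ℝ)) atTop (nhds (1+0)) :=
      tendsto_const_nhds.add tendsto_one_div_atTop_nhds_zero_nat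
    have h2 : Tendsto (fun k : ℕ => ((k:ℝ)+1)/(k:ℝ)) atTop (nhds 1) := by
      refine Tendsto.congr' ?_ (by simpa using h1)
      filter_upwards [eventually_ge_atTop 1] with k hk
      have hk0 : (k:ℝ) ≠ 0 := Nat.cast_ne_zero.2 (by omega)
      field_simp
    have := h2.pow 2
    norm_num at this
    exact this
  have hA : Tendsto (fun k : ℕ => u (k^2) / ((k:ℝ)+1)^2) atTop (nhds L) := by
    have := hT.mul hq
    rw [mul_one] at this
    refine Tendsto.congr' ?_ this
    filter_upwards [eventually_ge_atTop 1] with k hk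
    have hk0 : ((k:ℝ)) ≠ 0 := Nat.cast_ne_zero.2 (by omega)
    rw [div_pow]
    field_simp
  have hB : Tendsto (fun k : ℕ => u ((k+1)^2) / ((k:ℝ))^2) atTop (nhds L) := by
    have hshift : Tendsto (fun k : ℕ => u ((k+1)^2) / (((k:ℝ)+1))^2) atTop (nhds L) := by
      have := hT.comp (tendsto_add_atTop_nat 1)
      refine Tendsto.congr' ?_ this
      filter_upwards with k
      show u ((k+1)^2) / (((k+1:ℕ):ℝ))^2 = _
      push_cast
      ring_nf
    have := hshift.mul hr
    rw [mul_one] at this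
    refine Tendsto.congr' ?_ this
    filter_upwards [eventually_ge_atTop 1] with k hk
    have hk0 : ((k:ℝ)) ≠ 0 := Nat.cast_ne_zero.2 (by omega)
    rw [div_pow]
    field_simp
  refine tendsto_of_tendsto_of_tendsto_of_le_of_le' (hA.comp sqrt_tendsto)
    (hB.comp sqrt_tendsto) ?_ ?_
  · filter_upwards [eventually_ge_atTop 1] with n hn
    set k := Nat.sqrt n with hk
    have hk2 : k^2 ≤ n := Nat.sqrt_le' n
    have hk3 : n < (k+1)^2 := Nat.lt_succ_sqrt' n
    have hnR : (0:ℝ) < n := by exact_mod_cast hn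
    have hle : (n:ℝ) ≤ ((k:ℝ)+1)^2 := by
      have : (n:ℝ) < (((k+1)^2 : ℕ):ℝ) := by exact_mod_cast hk3
      push_cast at this
      linarith
    have h1 : u (k^2) / ((k:ℝ)+1)^2 ≤ u (k^2) / (n:ℝ) :=
      div_le_div_of_nonneg_left (hnn _) hnR hle
    have h2 : u (k^2) / (n:ℝ) ≤ u n / (n:ℝ) :=
      (div_le_div_iff_of_pos_right hnR).2 (hmono hk2)
    exact h1.trans h2
  · filter_upwards [eventually_ge_atTop 1] with n hn
    set k := Nat.sqrt n with hk
    have hk1 : 1 ≤ k := Nat.le_sqrt.2 (by simpa using hn)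
    have hk2 : k^2 ≤ n := Nat.sqrt_le' n
    have hk3 : n ≤ (k+1)^2 := le_of_lt (Nat.lt_succ_sqrt' n)
    have hnR : (0:ℝ) < n := by exact_mod_cast hn
    have hkR : (0:ℝ) < ((k:ℝ))^2 := by
      have : (0:ℝ) < k := by exact_mod_cast hk1
      positivity
    have h1 : u n / (n:ℝ) ≤ u ((k+1)^2) / (n:ℝ) :=
      (div_le_div_iff_of_pos_right hnR).2 (hmono hk3)
    have h2 : u ((k+1)^2) / (n:ℝ) ≤ u ((k+1)^2) / ((k:ℝ))^2 := by
      apply div_le_div_of_nonneg_left (hnn _) hkR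
      have : (((k^2:ℕ)):ℝ) ≤ (n:ℝ) := by exact_mod_cast hk2
      push_cast at this
      linarith
    exact h1.trans h2

end Stmt19

namespace Stmt19

noncomputable def Tk (k : ℕ) (ω : ℕ → Bool) : ℝ := Sf (k^2) ω / ((k^2 : ℕ) : ℝ)

noncomputable def Dk (k : ℕ) (ω : ℕ → Bool) : ℝ := Tk (k+2) ω - Tk (k+1) ω

lemma integrable_Sf (P : Measure (ℕ → Bool)) [IsProbabilityMeasure P] (n : ℕ) :
    Integrable (Sf n) P :=
  integrable_finset_sum _ fun i _ => integrable_ff P i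

lemma measurable_Dk (k : ℕ) : Measurable (Dk k) :=
  ((measurable_Sf _).div_const _).sub ((measurable_Sf _).div_const _)

lemma integrable_Dk (P : Measure (ℕ → Bool)) [IsProbabilityMeasure P] (k : ℕ) :
    Integrable (Dk k) P :=
  (((integrable_Sf P _).div_const _).sub ((integrable_Sf P _).div_const _))

lemma int_Dk_sq (P : Measure (ℕ → Bool)) [IsProbabilityMeasure P] (hP : Exchangeable P)
    (k : ℕ) :
    ∫ ω, (Dk k ω)^2 ∂P
      = (vv P - cc P) * (1/(((k+1)^2:ℕ):ℝ) - 1/(((k+2)^2:ℕ):ℝ)) := by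
  have h := secondmoment P hP (m := (k+1)^2) (n := (k+2)^2)
    (Nat.one_le_iff_ne_zero.2 (by positivity)) (Nat.pow_le_pow_left (by omega) 2)
  exact h

lemma vc_nonneg (P : Measure (ℕ → Bool)) [IsProbabilityMeasure P] :
    0 ≤ vv P - cc P := by
  have : P {ω | ω 0 = true ∧ ω 1 = true} ≤ P {ω | ω 0 = true} :=
    measure_mono fun ω h => h.1
  have h2 := ENNReal.toReal_mono (measure_ne_top P _) this
  simpa [vv, cc] using h2

lemma vc_le_one (P : Measure (ℕ → Bool)) [IsProbabilityMeasure P] :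
    vv P - cc P ≤ 1 := by
  have h1 : vv P ≤ 1 := by
    have : P {ω | ω 0 = true} ≤ 1 := prob_le_one
    simpa [vv] using ENNReal.toReal_mono (by simp) this
  have h2 : 0 ≤ cc P := ENNReal.toReal_nonneg
  linarith

lemma int_Dk_sq_le (P : Measure (ℕ → Bool)) [IsProbabilityMeasure P] (hP : Exchangeable P)
    (k : ℕ) :
    ∫ ω, (Dk k ω)^2 ∂P ≤ 2/((k:ℝ)+1)^3 := by
  rw [int_Dk_sq P hP k]
  set x : ℝ := (k:ℝ)+1 with hx
  have hx1 : (1:ℝ) ≤ x := by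
    rw [hx]
    have : (0:ℝ) ≤ (k:ℝ) := Nat.cast_nonneg k
    linarith
  have hx0 : (0:ℝ) < x := lt_of_lt_of_le zero_lt_one hx1
  have hc1 : (((k+1)^2:ℕ):ℝ) = x^2 := by push_cast; ring
  have hc2 : (((k+2)^2:ℕ):ℝ) = (x+1)^2 := by push_cast; ring
  rw [hc1, hc2]
  have hkey : 1/x^2 - 1/(x+1)^2 ≤ 2/x^3 := by
    rw [div_sub_div _ _ (by positivity) (by positivity), div_le_div_iff₀ (by positivity) (by positivity)]
    nlinarith [sq_nonneg x, sq_nonneg (x+1), pow_pos hx0 3]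
  have hnn : 0 ≤ 1/x^2 - 1/(x+1)^2 := by
    have : (x:ℝ)^2 ≤ (x+1)^2 := by nlinarith
    have h1 : 1/(x+1)^2 ≤ 1/x^2 :=
      div_le_div_of_nonneg_left zero_le_one (by positivity) this
    linarith
  calc (vv P - cc P) * (1/x^2 - 1/(x+1)^2) ≤ 1 * (1/x^2 - 1/(x+1)^2) :=
        mul_le_mul_of_nonneg_right (vc_le_one P) hnn
    _ = 1/x^2 - 1/(x+1)^2 := one_mul _
    _ ≤ 2/x^3 := hkey

lemma int_abs_Dk_le (P : Measure (ℕ → Bool)) [IsProbabilityMeasure P] (hP : Exchangeable P)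
    (k : ℕ) :
    ∫ ω, |Dk k ω| ∂P ≤ (2/((k:ℝ)+1)^3) ^ ((1:ℝ)/2) := by
  have hpq : Real.HolderConjugate 2 2 := Real.HolderConjugate.two_two
  have hDb : ∀ ω, ‖|Dk k ω|‖ ≤ 2 := by
    intro ω
    rw [Real.norm_eq_abs, abs_abs, Dk]
    have h1 : 0 ≤ Tk (k+2) ω := div_nonneg (Sf_nonneg _ ω) (Nat.cast_nonneg _)
    have h2 : 0 ≤ Tk (k+1) ω := div_nonneg (Sf_nonneg _ ω) (Nat.cast_nonneg _)
    have h3 : ∀ j : ℕ, Tk j ω ≤ 1 := by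
      intro j
      rcases Nat.eq_zero_or_pos (j^2) with h | h
      · simp [Tk, h]
      · rw [Tk, div_le_one (by exact_mod_cast h)]
        exact Sf_le _ ω
    rw [abs_le]
    constructor <;> nlinarith [h3 (k+2), h3 (k+1)]
  have hmem : MemLp (fun ω => |Dk k ω|) (ENNReal.ofReal 2) P :=
    MemLp.of_bound (measurable_Dk k).abs.aestronglyMeasurable 2
      (Filter.Eventually.of_forall hDb)
  have hmem1 : MemLp (fun _ : (ℕ → Bool) => (1:ℝ)) (ENNReal.ofReal 2) P := memLp_const 1
  have h := integral_mul_le_Lp_mul_Lq_of_nonneg hpq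
    (f := fun ω => |Dk k ω|) (g := fun _ => (1:ℝ))
    (Filter.Eventually.of_forall fun ω => abs_nonneg _)
    (Filter.Eventually.of_forall fun _ => zero_le_one) hmem hmem1
  simp only [mul_one] at h
  have hg : ∫ ω : (ℕ → Bool), (1:ℝ) ^ (2:ℝ) ∂P = 1 := by simp
  rw [hg] at h
  have h1 : ∀ ω, |Dk k ω| ^ (2:ℝ) = (Dk k ω)^2 := by
    intro ω
    rw [show (2:ℝ) = ((2:ℕ):ℝ) by norm_num, Real.rpow_natCast, sq_abs]
  simp only [h1] at h
  have h2 : (∫ ω, (Dk k ω)^2 ∂P) ^ ((1:ℝ)/2) ≤ (2/((k:ℝ)+1)^3) ^ ((1:ℝ)/2) :=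
    Real.rpow_le_rpow (integral_nonneg fun ω => sq_nonneg _)
      (int_Dk_sq_le P hP k) (by norm_num)
  calc ∫ ω, |Dk k ω| ∂P ≤ (∫ ω, (Dk k ω)^2 ∂P) ^ ((1:ℝ)/2) * 1 ^ ((1:ℝ)/2) := h
    _ = (∫ ω, (Dk k ω)^2 ∂P) ^ ((1:ℝ)/2) := by rw [Real.one_rpow, mul_one]
    _ ≤ (2/((k:ℝ)+1)^3) ^ ((1:ℝ)/2) := h2

lemma summable_bound : Summable (fun k : ℕ => (2/((k:ℝ)+1)^3) ^ ((1:ℝ)/2)) := by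
  have hs : Summable (fun k : ℕ => ((k:ℝ)+1) ^ (-(3:ℝ)/2)) := by
    have := (summable_nat_add_iff (f := fun n : ℕ => (n:ℝ) ^ (-(3:ℝ)/2)) 1).2
      (Real.summable_nat_rpow.2 (by norm_num))
    refine this.congr fun k => ?_
    push_cast
    ring_nf
  have key : ∀ k : ℕ, (2/((k:ℝ)+1)^3) ^ ((1:ℝ)/2)
      = 2 ^ ((1:ℝ)/2) * ((k:ℝ)+1) ^ (-(3:ℝ)/2) := by
    intro k
    have hx0 : (0:ℝ) < (k:ℝ)+1 := by positivity
    rw [Real.div_rpow (by norm_num) (by positivity), div_eq_mul_inv]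
    congr 1
    rw [← Real.rpow_natCast ((k:ℝ)+1) 3, ← Real.rpow_mul hx0.le, ← Real.rpow_neg hx0.le]
    norm_num
  rw [funext key]
  exact hs.mul_left _

end Stmt19

namespace Stmt19

lemma ae_summable (P : Measure (ℕ → Bool)) [IsProbabilityMeasure P] (hP : Exchangeable P) :
    ∀ᵐ ω ∂P, Summable (fun k : ℕ => |Dk k ω|) := by
  set F : ℕ → (ℕ → Bool) → ENNReal := fun k ω => ENNReal.ofReal |Dk k ω| with hF
  have hmeas : ∀ k, Measurable (F k) :=
    fun k => ENNReal.measurable_ofReal.comp (measurable_Dk k).abs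
  have hsum : Summable (fun k : ℕ => ∫ ω, |Dk k ω| ∂P) := by
    refine Summable.of_nonneg_of_le (fun k => integral_nonneg fun ω => abs_nonneg _)
      (fun k => int_abs_Dk_le P hP k) summable_bound
  have hlint : ∫⁻ ω, ∑' k, F k ω ∂P ≠ ⊤ := by
    rw [lintegral_tsum fun k => (hmeas k).aemeasurable]
    have heq : ∀ k : ℕ, ∫⁻ ω, F k ω ∂P = ENNReal.ofReal (∫ ω, |Dk k ω| ∂P) := by
      intro k
      rw [← ofReal_integral_eq_lintegral_ofReal ((integrable_Dk P k).abs)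
        (Filter.Eventually.of_forall fun ω => abs_nonneg _)]
    rw [funext heq, ← ENNReal.ofReal_tsum_of_nonneg
      (fun k => integral_nonneg fun ω => abs_nonneg _) hsum]
    exact ENNReal.ofReal_ne_top
  have hae := ae_lt_top (Measurable.ennreal_tsum hmeas) hlint
  filter_upwards [hae] with ω hω
  have := ENNReal.summable_toReal hω.ne
  refine this.congr fun k => ?_
  rw [hF]
  exact ENNReal.toReal_ofReal (abs_nonneg _)

lemma ae_tendsto_Tk (P : Measure (ℕ → Bool)) [IsProbabilityMeasure P] (hP : Exchangeable P) :
    ∀ᵐ ω ∂P, ∃ L : ℝ, Tendsto (fun k : ℕ => Tk k ω) atTop (nhds L) := by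
  filter_upwards [ae_summable P hP] with ω hω
  have hsum : Summable (fun k => Dk k ω) := hω.of_abs
  have htel : ∀ K : ℕ, ∑ k ∈ Finset.range K, Dk k ω = Tk (K+1) ω - Tk 1 ω := by
    intro K
    exact Finset.sum_range_sub (fun k => Tk (k+1) ω) K
  have hconv := hsum.hasSum.tendsto_sum_nat
  rw [funext htel] at hconv
  have hconv2 : Tendsto (fun K : ℕ => Tk (K+1) ω) atTop
      (nhds ((∑' k, Dk k ω) + Tk 1 ω)) := by
    have := hconv.add_const (Tk 1 ω)
    simpa using this
  refine ⟨(∑' k, Dk k ω) + Tk 1 ω, ?_⟩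
  exact (tendsto_add_atTop_iff_nat 1).1 hconv2

end Stmt19

/-- An exchangeable probability measure on `{0,1}^ℕ` assigns probability 1 to
the event that the limiting relative frequency of 1's exists. -/
theorem stmt19 (P : Measure (ℕ → Bool)) [IsProbabilityMeasure P]
    (hP : Exchangeable P) :
    P {ω | ∃ L : ℝ, Tendsto
        (fun n : ℕ => (∑ i ∈ Finset.range n, if ω i then (1 : ℝ) else 0) / n)
        atTop (nhds L)} = 1 := by
  set S := {ω : ℕ → Bool | ∃ L : ℝ, Tendsto
      (fun n : ℕ => (∑ i ∈ Finset.range n, if ω i then (1 : ℝ) else 0) / n)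
      atTop (nhds L)} with hS
  have hae : ∀ᵐ ω ∂P, ω ∈ S := by
    filter_upwards [Stmt19.ae_tendsto_Tk P hP] with ω hω
    obtain ⟨L, hL⟩ := hω
    refine ⟨L, ?_⟩
    have hL' : Tendsto (fun k : ℕ => Sf (k^2) ω / ((k:ℝ))^2) atTop (nhds L) := by
      refine hL.congr fun k => ?_
      rw [Stmt19.Tk]
      norm_num
    have := Stmt19.freq_conv (u := fun n => Sf n ω) (Stmt19.Sf_mono ω)
      (fun n => Stmt19.Sf_nonneg n ω) hL'
    exact this
  have hcompl : P Sᶜ = 0 := hae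
  have h1 : P S ≤ 1 := prob_le_one
  have h2 : (1:ENNReal) ≤ P S := by
    have := measure_union_le (μ := P) S Sᶜ
    rw [Set.union_compl_self, measure_univ, hcompl, add_zero] at this
    exact this
  exact le_antisymm h1 h2
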